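/- If d > r − 1, the subspace of locally polynomial functions ℤ_p → E of degree at most d is dense in the Banach space C^r(ℤ_p, E). -/

import Mathlib

open Filter Classical

variable (p : ℕ) [Fact p.Prime] (E : Type*) [NontriviallyNormedField E]
  [NormedAlgebra ℚ_[p] E] [FiniteDimensional ℚ_[p] E]

/-- The Mahler coefficients `a_n(f) = ∑_{i=0}^n (-1)^i C(n,i) f(n-i)`. -/
noncomputable def mahlerCoeff (f : ℤ_[p] → E) (n : ℕ) : E :=
  ∑ i ∈ Finset.range (n + 1), (-1 : E) ^ i * (n.choose i : E) * f ((n - i : ℕ) : ℤ_[p])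

/-- `f : ℤ_p → E` is of class `C^r` if `n^r |a_n(f)| → 0`. -/
def IsCr (r : ℝ) (f : ℤ_[p] → E) : Prop :=
  Tendsto (fun n : ℕ => (n : ℝ) ^ r * ‖mahlerCoeff p E f n‖) atTop (nhds (0 : ℝ))

/-- The norm `‖f‖_r = sup_n (n+1)^r |a_n(f)|`. -/
noncomputable def crNorm (r : ℝ) (f : ℤ_[p] → E) : ℝ :=
  ⨆ n : ℕ, ((n : ℝ) + 1) ^ r * ‖mahlerCoeff p E f n‖

/-- The locally polynomial function `(z-a)^j 𝟙_{a + pⁿℤ_p}`. -/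
noncomputable def indPoly (a : ℤ_[p]) (n j : ℕ) : ℤ_[p] → E := fun z =>
  if ‖z - a‖ ≤ (p : ℝ) ^ (-(n : ℤ)) then (algebraMap ℚ_[p] E ((z : ℚ_[p]) - (a : ℚ_[p]))) ^ j
  else 0

/-- The space of locally polynomial functions `ℤ_p → E` of degree at most `d`. -/
noncomputable def LocPoly (d : ℕ) : Submodule E (ℤ_[p] → E) :=
  Submodule.span E {g | ∃ (a : ℤ_[p]) (n j : ℕ), j ≤ d ∧ g = indPoly p E a n j}

/-!
Mahler coefficients are iterated forward differences at `0`, and by Newton's formula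
`Δ^[p^N] = Δ_[p^N] - ∑_{0<k<p^N} C(p^N, k) Δ^k`, where the sum has operator norm `≤ p⁻¹` for the
sup norm since `p ∣ C(p^N, k)`. As `Δ_[p^N]` lowers the degree of `(z - a)^j 𝟙_{a + p^N ℤ_p}`,
the `n`-th Mahler coefficient of this function is `O(p^(j - n / p^N - N j))`, so its `C^r` norm is
`O(p^(N (r - j)))`. On each coset of `p^N ℤ_p` a polynomial differs from its Taylor expansion of
degree `d` by such terms with `j > d > r - 1`, so polynomials, hence the binomial functions
`z ↦ C(z, k)`, lie in the `C^r`-closure of the locally polynomial functions of degree `≤ d`; and so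
does every function of class `C^r`, being the `C^r`-limit of the partial sums of its Mahler series.
-/

open Finset Polynomial fwdDiff

lemma exists_forall_succ_rpow_mul_pow_le (r : ℝ) {ρ : ℝ} (hρ0 : 0 < ρ) (hρ1 : ρ < 1) :
    ∃ C, ∀ q : ℕ, ((q : ℝ) + 1) ^ r * ρ ^ q ≤ C := by
  obtain ⟨C, hC⟩ := (tendsto_pow_const_mul_const_pow_of_lt_one ⌈r⌉₊ hρ0.le hρ1).bddAbove_range
  refine ⟨C / ρ, fun q => (le_div_iff₀ hρ0).mpr ?_⟩
  calc ((q : ℝ) + 1) ^ r * ρ ^ q * ρ ≤ ((q : ℝ) + 1) ^ (⌈r⌉₊ : ℝ) * ρ ^ q * ρ := by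
        gcongr
        exacts [by linarith [q.cast_nonneg (α := ℝ)], Nat.le_ceil r]
    _ = ((q + 1 : ℕ) : ℝ) ^ ⌈r⌉₊ * ρ ^ (q + 1) := by
        rw [Real.rpow_natCast]
        push_cast
        ring
    _ ≤ C := hC ⟨q + 1, rfl⟩

section FwdDiff

variable {M G G' : Type*} [AddCommMonoid M] [AddCommGroup G] [AddCommGroup G']

lemma fwdDiff_iter_addMonoidHom_comp (φ : G →+ G') (h : M) (f : M → G) (n : ℕ) :
    Δ_[h] ^[n] (φ ∘ f) = φ ∘ Δ_[h] ^[n] f := by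
  funext y
  simp [fwdDiff_iter_eq_sum_shift, map_sum, map_zsmul]

lemma fwdDiff_iter_sub (h : M) (f g : M → G) (n : ℕ) :
    Δ_[h] ^[n] (f - g) = Δ_[h] ^[n] f - Δ_[h] ^[n] g := by
  funext y
  simp [fwdDiff_iter_eq_sum_shift, smul_sub]

lemma fwdDiff_iter_zero (h : M) (n : ℕ) : Δ_[h] ^[n] (0 : M → G) = 0 :=
  Function.iterate_fixed (by funext; simp [fwdDiff]) n

lemma fwdDiff_iter_comp_addMonoidHom {M' : Type*} [AddCommMonoid M'] (ψ : M →+ M') (h : M)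
    (f : M' → G) (n : ℕ) (y : M) : Δ_[h] ^[n] (f ∘ ψ) y = Δ_[ψ h] ^[n] f (ψ y) := by
  simp [fwdDiff_iter_eq_sum_shift, map_nsmul]

lemma commute_fwdDiff_fwdDiff (h h' : M) :
    Function.Commute (fwdDiff h : (M → G) → M → G) (fwdDiff h') := by
  intro f
  funext y
  simp only [fwdDiff, add_right_comm y h h']
  abel

lemma fwdDiff_iter_indicator {h : M} {S : Set M} (hS : ∀ y, y + h ∈ S ↔ y ∈ S) (f : M → G)
    (n : ℕ) : Δ_[h] ^[n] (S.indicator f) = S.indicator (Δ_[h] ^[n] f) := by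
  induction n with
  | zero => rfl
  | succ n ih =>
    rw [Function.iterate_succ_apply', ih, Function.iterate_succ_apply']
    funext y
    by_cases hy : y ∈ S <;> simp [fwdDiff, hS, hy]

lemma IsUltrametricDist.norm_fwdDiff_iter_apply_le_of_forall_le {G : Type*}
    [SeminormedAddCommGroup G] [IsUltrametricDist G] (h : M) {f : M → G} {B : ℝ}
    (hf : ∀ y, ‖f y‖ ≤ B) (n : ℕ) (y : M) : ‖Δ_[h] ^[n] f y‖ ≤ B := by
  rw [fwdDiff_iter_eq_sum_shift]
  exact norm_sum_le_of_forall_le_of_nonempty nonempty_range_add_one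
    fun k _ => (norm_zsmul_le _ _).trans (hf _)

def fwdDiffCorrection {M : Type*} [AddCommMonoidWithOne M] (P : ℕ) (f : M → G) : M → G :=
  ∑ k ∈ Ico 1 P, P.choose k • Δ_[1] ^[k] f

lemma fwdDiff_iter_eq_sub_fwdDiffCorrection {M : Type*} [AddCommMonoidWithOne M] {P : ℕ}
    (hP : 1 ≤ P) (f : M → G) : Δ_[1] ^[P] f = Δ_[(P : M)] f - fwdDiffCorrection P f := by
  funext y
  have newton := shift_eq_sum_fwdDiff_iter 1 f P y
  rw [sum_range_succ, range_eq_Ico, sum_eq_sum_Ico_succ_bot (by omega : 0 < P)] at newton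
  simp only [nsmul_one, Function.iterate_zero, id, Nat.choose_zero_right, Nat.choose_self,
    one_smul, zero_add] at newton
  simp only [fwdDiff, fwdDiffCorrection, Pi.sub_apply, Finset.sum_apply, Pi.smul_apply, newton]
  abel

lemma commute_fwdDiff_fwdDiffCorrection {M : Type*} [AddCommMonoidWithOne M] (h : M) (P : ℕ) :
    Function.Commute (fwdDiff h : (M → G) → M → G) (fwdDiffCorrection P) := by
  intro f
  simp only [fwdDiffCorrection, fwdDiff_finsetSum, fwdDiff_const_smul,
    (commute_fwdDiff_fwdDiff h 1).iterate_right _ f]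

lemma Polynomial.fwdDiff_iter_eval_eq_zero_of_natDegree_lt {R : Type*} [CommRing R] (h : R)
    {Q : R[X]} {n : ℕ} (hQ : Q.natDegree < n) : Δ_[h] ^[n] Q.eval = 0 := by
  funext y
  have hdeg : (Q.comp (C h * X + C y)).natDegree < n :=
    natDegree_comp_le.trans_lt (by nlinarith [natDegree_linear_le (a := h) (b := y)])
  have hscale : Δ_[h] ^[n] Q.eval y = Δ_[1] ^[n] (Q.comp (C h * X + C y)).eval 0 := by
    simp only [fwdDiff_iter_eq_sum_shift, eval_comp, eval_add, eval_mul, eval_C, eval_X,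
      nsmul_eq_mul, mul_one, zero_add]
    exact sum_congr rfl fun k _ => by ring_nf
  rw [hscale, Polynomial.fwdDiff_iter_eq_zero_of_degree_lt hdeg]
  rfl

end FwdDiff

section MahlerCoeff

omit [NormedAlgebra ℚ_[p] E] [FiniteDimensional ℚ_[p] E]

lemma mahlerCoeff_eq_fwdDiff_iter (f : ℤ_[p] → E) (n : ℕ) :
    mahlerCoeff p E f n = Δ_[1] ^[n] f 0 := by
  rw [mahlerCoeff, fwdDiff_iter_eq_sum_shift, ← sum_range_reflect]
  refine sum_congr rfl fun i hi => ?_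
  have hi : i ≤ n := Nat.lt_succ_iff.mp (mem_range.mp hi)
  rw [Nat.add_sub_cancel, Nat.sub_sub_self hi, Nat.choose_symm hi, zsmul_eq_mul]
  simp [nsmul_eq_mul]

lemma mahlerCoeff_eq_fwdDiff_iter_natCast (f : ℤ_[p] → E) (n : ℕ) :
    mahlerCoeff p E f n = Δ_[1] ^[n] (fun m : ℕ => f m) 0 := by
  have h := fwdDiff_iter_comp_addMonoidHom (Nat.castAddMonoidHom ℤ_[p]) 1 f n 0
  simp only [Nat.coe_castAddMonoidHom, Nat.cast_one, Nat.cast_zero] at h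
  rw [mahlerCoeff_eq_fwdDiff_iter]
  exact h.symm

noncomputable def mahlerCoeffₗ (n : ℕ) : (ℤ_[p] → E) →ₗ[E] E where
  toFun f := mahlerCoeff p E f n
  map_add' f g := by simp [mahlerCoeff_eq_fwdDiff_iter]
  map_smul' c f := by simp [mahlerCoeff_eq_fwdDiff_iter]

lemma mahlerCoeff_add (f g : ℤ_[p] → E) (n : ℕ) :
    mahlerCoeff p E (f + g) n = mahlerCoeff p E f n + mahlerCoeff p E g n :=
  map_add (mahlerCoeffₗ p E n) f g

lemma mahlerCoeff_sub (f g : ℤ_[p] → E) (n : ℕ) :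
    mahlerCoeff p E (f - g) n = mahlerCoeff p E f n - mahlerCoeff p E g n :=
  map_sub (mahlerCoeffₗ p E n) f g

lemma mahlerCoeff_smul (c : E) (f : ℤ_[p] → E) (n : ℕ) :
    mahlerCoeff p E (c • f) n = c * mahlerCoeff p E f n :=
  map_smul (mahlerCoeffₗ p E n) c f

lemma mahlerCoeff_sum {ι : Type*} (s : Finset ι) (F : ι → ℤ_[p] → E) (n : ℕ) :
    mahlerCoeff p E (∑ i ∈ s, F i) n = ∑ i ∈ s, mahlerCoeff p E (F i) n :=
  map_sum (mahlerCoeffₗ p E n) F s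

/-- `‖f‖_r ≤ ε`, stated coefficientwise: unlike `crNorm p E r f ≤ ε` it is not satisfied by the
junk value `0` of an unbounded supremum. -/
def CrNormLE (r : ℝ) (f : ℤ_[p] → E) (ε : ℝ) : Prop :=
  ∀ n : ℕ, ((n : ℝ) + 1) ^ r * ‖mahlerCoeff p E f n‖ ≤ ε

namespace CrNormLE

variable {p E} {r ε δ : ℝ} {f g : ℤ_[p] → E}

lemma mono (hf : CrNormLE p E r f ε) (h : ε ≤ δ) : CrNormLE p E r f δ :=
  fun n => (hf n).trans h

lemma add (hf : CrNormLE p E r f ε) (hg : CrNormLE p E r g δ) :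
    CrNormLE p E r (f + g) (ε + δ) := by
  intro n
  rw [mahlerCoeff_add]
  calc _ ≤ ((n : ℝ) + 1) ^ r * (‖mahlerCoeff p E f n‖ + ‖mahlerCoeff p E g n‖) :=
        mul_le_mul_of_nonneg_left (norm_add_le _ _) (by positivity)
    _ ≤ ε + δ := by rw [mul_add]; exact add_le_add (hf n) (hg n)

lemma smul (c : E) (hf : CrNormLE p E r f ε) : CrNormLE p E r (c • f) (‖c‖ * ε) := by
  intro n
  rw [mahlerCoeff_smul, norm_mul, mul_left_comm]
  exact mul_le_mul_of_nonneg_left (hf n) (norm_nonneg c)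

lemma sum [IsUltrametricDist E] {ι : Type*} {s : Finset ι} {F : ι → ℤ_[p] → E} (hε : 0 ≤ ε)
    (hF : ∀ i ∈ s, CrNormLE p E r (F i) ε) : CrNormLE p E r (∑ i ∈ s, F i) ε := by
  intro n
  have hn : 0 < ((n : ℝ) + 1) ^ r := by positivity
  rw [mahlerCoeff_sum, ← le_div_iff₀' hn]
  exact IsUltrametricDist.norm_sum_le_of_forall_le_of_nonneg (by positivity)
    fun i hi => (le_div_iff₀' hn).mpr (hF i hi n)

lemma crNorm_le (hf : CrNormLE p E r f ε) (hε : 0 ≤ ε) : crNorm p E r f ≤ ε :=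
  Real.iSup_le hf hε

end CrNormLE

lemma IsCr.tendsto_succ_rpow_mul_norm_mahlerCoeff {r : ℝ} {f : ℤ_[p] → E} (hf : IsCr p E r f) :
    Tendsto (fun n : ℕ => ((n : ℝ) + 1) ^ r * ‖mahlerCoeff p E f n‖) atTop (nhds 0) := by
  have hratio : Tendsto (fun n : ℕ => (1 + 1 / (n : ℝ)) ^ r) atTop (nhds 1) := by
    simpa using ((tendsto_one_div_atTop_nhds_zero_nat (𝕜 := ℝ)).const_add 1).rpow_const
      (Or.inl (by norm_num))
  have hlim : Tendsto (fun n : ℕ => (1 + 1 / (n : ℝ)) ^ r * ((n : ℝ) ^ r *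
      ‖mahlerCoeff p E f n‖)) atTop (nhds 0) := by
    simpa using hratio.mul hf
  refine hlim.congr' ?_
  filter_upwards [eventually_ge_atTop 1] with n hn
  have hn : (n : ℝ) ≠ 0 := by positivity
  rw [← mul_assoc, ← Real.mul_rpow (by positivity) (by positivity), add_mul, one_div,
    inv_mul_cancel₀ hn, one_mul, add_comm]

end MahlerCoeff

section Padic

omit [FiniteDimensional ℚ_[p] E]

noncomputable def ofPadicInt : ℤ_[p] →+* E := (algebraMap ℚ_[p] E).comp PadicInt.Coe.ringHom

lemma norm_ofPadicInt (x : ℤ_[p]) : ‖ofPadicInt p E x‖ = ‖x‖ := by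
  rw [ofPadicInt, RingHom.comp_apply, norm_algebraMap']
  rfl

lemma norm_natCast_eq (n : ℕ) : ‖(n : E)‖ = ‖(n : ℤ_[p])‖ := by
  rw [← map_natCast (ofPadicInt p E), norm_ofPadicInt]

include p in
lemma isUltrametricDist : IsUltrametricDist E :=
  IsUltrametricDist.isUltrametricDist_of_forall_norm_natCast_le_one fun n =>
    (norm_natCast_eq p E n).trans_le (PadicInt.norm_le_one _)

lemma norm_natCast_le_inv_of_dvd {n : ℕ} (hn : p ∣ n) : ‖(n : E)‖ ≤ (p : ℝ)⁻¹ := by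
  obtain ⟨m, rfl⟩ := hn
  rw [norm_natCast_eq p E, Nat.cast_mul, norm_mul, PadicInt.norm_p]
  exact mul_le_of_le_one_right (by positivity) (PadicInt.norm_le_one _)

variable {M : Type*} [AddCommMonoidWithOne M]

lemma norm_fwdDiffCorrection_apply_le (N : ℕ) {u : M → E} {B : ℝ} (hu : ∀ y, ‖u y‖ ≤ B)
    (y : M) : ‖fwdDiffCorrection (p ^ N) u y‖ ≤ (p : ℝ)⁻¹ * B := by
  have := isUltrametricDist p E
  have hB : 0 ≤ B := (norm_nonneg _).trans (hu y)
  simp only [fwdDiffCorrection, Finset.sum_apply, Pi.smul_apply]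
  refine IsUltrametricDist.norm_sum_le_of_forall_le_of_nonneg (by positivity) fun k hk => ?_
  obtain ⟨hk1, hkP⟩ := mem_Ico.mp hk
  rw [nsmul_eq_mul, norm_mul]
  exact mul_le_mul (norm_natCast_le_inv_of_dvd p E <|
      (Fact.out : p.Prime).dvd_choose_pow (by omega) hkP.ne)
    (IsUltrametricDist.norm_fwdDiff_iter_apply_le_of_forall_le 1 hu k y) (norm_nonneg _)
    (by positivity)

/-- In `Δ^[p^N] = Δ_[p^N] - fwdDiffCorrection (p^N)` the correction contracts by `p⁻¹`, so each
block of `p^N` differences gains a factor `p⁻¹`, except for at most `l` blocks spent on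
`Δ_[p^N]`. -/
lemma norm_fwdDiff_iter_pow_mul_apply_le (N q l : ℕ) {u : M → E} {B : ℝ}
    (hu : ∀ y, ‖u y‖ ≤ B) (hl : Δ_[((p ^ N : ℕ) : M)] ^[l] u = 0) (y : M) :
    ‖Δ_[1] ^[p ^ N * q] u y‖ ≤ (p : ℝ) ^ l * (p : ℝ)⁻¹ ^ q * B := by
  have := isUltrametricDist p E
  have hp : (1 : ℝ) < p := mod_cast (Fact.out : p.Prime).one_lt
  induction q generalizing l u B y with
  | zero =>
    simpa using (hu y).trans (le_mul_of_one_le_left ((norm_nonneg _).trans (hu y))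
      (one_le_pow₀ hp.le))
  | succ q ih =>
    have hB : 0 ≤ B := (norm_nonneg _).trans (hu y)
    rcases l with _ | l
    · obtain rfl : u = 0 := hl
      simp only [fwdDiff_iter_zero, Pi.zero_apply, norm_zero]
      positivity
    have hPu : ∀ y, ‖Δ_[((p ^ N : ℕ) : M)] u y‖ ≤ B :=
      IsUltrametricDist.norm_fwdDiff_iter_apply_le_of_forall_le _ hu 1
    have hCu : Δ_[((p ^ N : ℕ) : M)] ^[l + 1] (fwdDiffCorrection (p ^ N) u) = 0 := by
      rw [((commute_fwdDiff_fwdDiffCorrection _ _).iterate_left _).eq, hl]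
      simp [fwdDiffCorrection, fwdDiff_iter_zero]
    rw [Nat.mul_succ, Function.iterate_add_apply,
      fwdDiff_iter_eq_sub_fwdDiffCorrection (Nat.one_le_pow _ _ (Fact.out : p.Prime).pos)]
    rw [fwdDiff_iter_sub, Pi.sub_apply, sub_eq_add_neg]
    refine (IsUltrametricDist.norm_add_le_max _ _).trans (max_le ?_ ?_)
    · calc _ ≤ (p : ℝ) ^ l * (p : ℝ)⁻¹ ^ q * B := ih l hPu hl y
        _ = _ := by
          linear_combination (-((p : ℝ) ^ l * (p : ℝ)⁻¹ ^ q * B)) *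
            mul_inv_cancel₀ (zero_lt_one.trans hp).ne'
    · rw [norm_neg]
      calc _ ≤ (p : ℝ) ^ (l + 1) * (p : ℝ)⁻¹ ^ q * ((p : ℝ)⁻¹ * B) :=
            ih (l + 1) (norm_fwdDiffCorrection_apply_le p E N hu) hCu y
        _ = _ := by ring

lemma norm_add_natCast_pow_sub_le_iff (N : ℕ) (a z : ℤ_[p]) :
    ‖z + ((p ^ N : ℕ) : ℤ_[p]) - a‖ ≤ (p : ℝ) ^ (-(N : ℤ)) ↔
      ‖z - a‖ ≤ (p : ℝ) ^ (-(N : ℤ)) := by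
  rw [PadicInt.norm_le_pow_iff_mem_span_pow, PadicInt.norm_le_pow_iff_mem_span_pow,
    add_sub_right_comm]
  exact Ideal.add_mem_iff_left _ (by rw [Nat.cast_pow]; exact Ideal.mem_span_singleton_self _)

lemma indPoly_eq_indicator (a : ℤ_[p]) (N j : ℕ) :
    indPoly p E a N j = {z | ‖z - a‖ ≤ (p : ℝ) ^ (-(N : ℤ))}.indicator
      (ofPadicInt p E ∘ ((X - C a) ^ j).eval) := by
  funext z
  rw [indPoly, Set.indicator_apply]
  simp only [Set.mem_ofPred_eq, Function.comp_apply, eval_pow, eval_sub, eval_X, eval_C, map_pow]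
  rfl

lemma fwdDiff_iter_indPoly_eq_zero (a : ℤ_[p]) (N : ℕ) {j l : ℕ} (hjl : j < l) :
    Δ_[((p ^ N : ℕ) : ℤ_[p])] ^[l] (indPoly p E a N j) = 0 := by
  rw [indPoly_eq_indicator, fwdDiff_iter_indicator (norm_add_natCast_pow_sub_le_iff p N a)]
  change Set.indicator _ (Δ_[_] ^[l] ((ofPadicInt p E : ℤ_[p] →+ E) ∘ _)) = 0
  rw [fwdDiff_iter_addMonoidHom_comp,
    Polynomial.fwdDiff_iter_eval_eq_zero_of_natDegree_lt _ (by simpa using hjl)]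
  simp

lemma norm_indPoly_le (a : ℤ_[p]) (N j : ℕ) (z : ℤ_[p]) :
    ‖indPoly p E a N j z‖ ≤ ((p : ℝ)⁻¹ ^ N) ^ j := by
  rw [indPoly]
  split_ifs with hz
  · rw [norm_pow, norm_algebraMap', ← PadicInt.coe_sub, PadicInt.padic_norm_e_of_padicInt]
    rw [zpow_neg, zpow_natCast, ← inv_pow] at hz
    exact pow_le_pow_left₀ (norm_nonneg _) hz j
  · simp only [norm_zero]
    positivity

lemma norm_mahlerCoeff_indPoly_le (a : ℤ_[p]) (N j n : ℕ) :
    ‖mahlerCoeff p E (indPoly p E a N j) n‖ ≤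
      (p : ℝ) ^ (j + 1) * (p : ℝ)⁻¹ ^ (n / p ^ N) * ((p : ℝ)⁻¹ ^ N) ^ j := by
  have := isUltrametricDist p E
  have hdecay := norm_fwdDiff_iter_pow_mul_apply_le p E N (n / p ^ N) (j + 1)
    (norm_indPoly_le p E a N j) (fwdDiff_iter_indPoly_eq_zero p E a N (lt_add_one j))
  rw [mahlerCoeff_eq_fwdDiff_iter]
  conv_lhs => rw [← Nat.mod_add_div n (p ^ N), Function.iterate_add_apply]
  exact IsUltrametricDist.norm_fwdDiff_iter_apply_le_of_forall_le 1 hdecay _ 0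

lemma norm_sub_val_le_iff_toZModPow_eq {N : ℕ} (z : ℤ_[p]) (x : ZMod (p ^ N)) :
    ‖z - (x.val : ℤ_[p])‖ ≤ (p : ℝ) ^ (-(N : ℤ)) ↔ PadicInt.toZModPow N z = x := by
  rw [PadicInt.norm_le_pow_iff_mem_span_pow, ← PadicInt.ker_toZModPow, RingHom.mem_ker, map_sub,
    map_natCast, ZMod.natCast_zmod_val, sub_eq_zero]

/-- On each coset `x + p^N ℤ_p`, the Taylor expansion of `Q` at `x` truncated below degree `K`. -/
noncomputable def localTaylor (Q : ℤ_[p][X]) (N K : ℕ) : ℤ_[p] → E :=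
  ∑ x : ZMod (p ^ N), ∑ j ∈ range K,
    ofPadicInt p E ((taylor (x.val : ℤ_[p]) Q).coeff j) • indPoly p E x.val N j

lemma ofPadicInt_comp_eval_eq_localTaylor (Q : ℤ_[p][X]) (N : ℕ) {K : ℕ}
    (hK : Q.natDegree < K) : ofPadicInt p E ∘ Q.eval = localTaylor p E Q N K := by
  funext z
  simp only [localTaylor, Function.comp_apply, Finset.sum_apply, Pi.smul_apply, smul_eq_mul]
  rw [Fintype.sum_eq_single (PadicInt.toZModPow N z) fun x hx => sum_eq_zero fun j _ => by
    rw [indPoly, if_neg (mt (norm_sub_val_le_iff_toZModPow_eq p z x).mp (Ne.symm hx)), mul_zero]]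
  set a : ℤ_[p] := ((PadicInt.toZModPow N z).val : ℤ_[p])
  have hz : ‖z - a‖ ≤ (p : ℝ) ^ (-(N : ℤ)) := (norm_sub_val_le_iff_toZModPow_eq p z _).mpr rfl
  rw [← taylor_eval_sub a, eval_eq_sum_range' ((natDegree_taylor Q a).trans_lt hK), map_sum]
  refine sum_congr rfl fun j _ => ?_
  rw [indPoly, if_pos hz, map_mul, map_pow]
  rfl

lemma localTaylor_mem_locPoly (Q : ℤ_[p][X]) (N d : ℕ) :
    localTaylor p E Q N (d + 1) ∈ LocPoly p E d :=
  sum_mem fun _ _ => sum_mem fun j hj => Submodule.smul_mem _ _ <|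
    Submodule.subset_span ⟨_, N, j, Nat.lt_succ_iff.mp (mem_range.mp hj), rfl⟩

lemma crNormLE_indPoly {r : ℝ} (hr : 0 ≤ r) {C : ℝ}
    (hC : ∀ q : ℕ, ((q : ℝ) + 1) ^ r * (p : ℝ)⁻¹ ^ q ≤ C) {d j : ℕ} (hdj : d + 1 ≤ j)
    (a : ℤ_[p]) (N : ℕ) :
    CrNormLE p E r (indPoly p E a N j)
      (C * (p : ℝ) ^ (j + 1) * ((p : ℝ) ^ r * (p : ℝ)⁻¹ ^ (d + 1)) ^ N) := by
  intro n
  have hp0 : (0 : ℝ) < p := mod_cast (Fact.out : p.Prime).pos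
  set q := n / p ^ N
  have hn : (n : ℝ) + 1 ≤ (p : ℝ) ^ N * ((q : ℝ) + 1) :=
    mod_cast Nat.lt_mul_div_succ n (pow_pos (Fact.out : p.Prime).pos N)
  have hpow : ((p : ℝ)⁻¹ ^ N) ^ j ≤ ((p : ℝ)⁻¹ ^ N) ^ (d + 1) :=
    pow_le_pow_of_le_one (by positivity) (pow_le_one₀ (by positivity)
      (inv_le_one_of_one_le₀ (mod_cast (Fact.out : p.Prime).one_le))) hdj
  calc ((n : ℝ) + 1) ^ r * ‖mahlerCoeff p E (indPoly p E a N j) n‖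
      ≤ ((p : ℝ) ^ N * ((q : ℝ) + 1)) ^ r *
          ((p : ℝ) ^ (j + 1) * (p : ℝ)⁻¹ ^ q * ((p : ℝ)⁻¹ ^ N) ^ j) :=
        mul_le_mul (Real.rpow_le_rpow (by positivity) hn hr)
          (norm_mahlerCoeff_indPoly_le p E a N j n) (norm_nonneg _) (by positivity)
    _ = ((p : ℝ) ^ r) ^ N * (((q : ℝ) + 1) ^ r * (p : ℝ)⁻¹ ^ q) * (p : ℝ) ^ (j + 1) *
          ((p : ℝ)⁻¹ ^ N) ^ j := by
        rw [Real.mul_rpow (by positivity) (by positivity), ← Real.rpow_natCast,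
          ← Real.rpow_mul hp0.le, mul_comm (N : ℝ), Real.rpow_mul_natCast hp0.le]
        ring
    _ ≤ ((p : ℝ) ^ r) ^ N * C * (p : ℝ) ^ (j + 1) * ((p : ℝ)⁻¹ ^ N) ^ (d + 1) := by
        have hC0 : 0 ≤ C := (by positivity : (0 : ℝ) ≤ _).trans (hC 0)
        gcongr
        exact hC q
    _ = C * (p : ℝ) ^ (j + 1) * ((p : ℝ) ^ r * (p : ℝ)⁻¹ ^ (d + 1)) ^ N := by
        rw [← pow_mul, mul_comm N, pow_mul]
        ring

lemma crNormLE_localTaylor_sub {r : ℝ} (hr : 0 ≤ r) {C : ℝ}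
    (hC : ∀ q : ℕ, ((q : ℝ) + 1) ^ r * (p : ℝ)⁻¹ ^ q ≤ C) (Q : ℤ_[p][X]) (N : ℕ) {d K : ℕ}
    (hdK : d + 1 ≤ K) :
    CrNormLE p E r (localTaylor p E Q N K - localTaylor p E Q N (d + 1))
      (C * (p : ℝ) ^ K * ((p : ℝ) ^ r * (p : ℝ)⁻¹ ^ (d + 1)) ^ N) := by
  have := isUltrametricDist p E
  have hp : (1 : ℝ) ≤ p := mod_cast (Fact.out : p.Prime).one_le
  have hC0 : 0 ≤ C := (by positivity : (0 : ℝ) ≤ _).trans (hC 0)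
  rw [localTaylor, localTaylor, ← sum_sub_distrib]
  refine CrNormLE.sum (by positivity) fun x _ => ?_
  rw [← sum_range_add_sum_Ico _ hdK, add_sub_cancel_left]
  refine CrNormLE.sum (by positivity) fun j hj => ?_
  obtain ⟨hdj, hjK⟩ := mem_Ico.mp hj
  refine ((crNormLE_indPoly p E hr hC hdj _ N).smul _).mono ?_
  rw [norm_ofPadicInt]
  calc _ ≤ 1 * (C * (p : ℝ) ^ K * ((p : ℝ) ^ r * (p : ℝ)⁻¹ ^ (d + 1)) ^ N) := by
        gcongr
        exacts [PadicInt.norm_le_one _, hjK]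
    _ = _ := one_mul _

/-- The Mahler basis function `z ↦ (z choose k)`, written as `(k!)⁻¹ • z (z - 1) ⋯ (z - k + 1)`
to exhibit it as a scalar multiple of a polynomial over `ℤ_[p]`. -/
noncomputable def mahlerE (k : ℕ) : ℤ_[p] → E :=
  (k.factorial : E)⁻¹ • (ofPadicInt p E ∘ (descPochhammer ℤ_[p] k).eval)

lemma mahlerCoeff_mahlerE (k n : ℕ) :
    mahlerCoeff p E (mahlerE p E k) n = if n = k then 1 else 0 := by
  have hval : (fun m : ℕ => mahlerE p E k m) =
      Int.castAddHom E ∘ fun m : ℕ => (m.choose k : ℤ) := by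
    funext m
    have hk : (k.factorial : E) ≠ 0 := by
      rw [← norm_ne_zero_iff, norm_natCast_eq p E, norm_ne_zero_iff, Nat.cast_ne_zero]
      exact k.factorial_ne_zero
    simp [mahlerE, descPochhammer_eval_eq_descFactorial, Nat.descFactorial_eq_factorial_mul_choose,
      hk]
  rw [mahlerCoeff_eq_fwdDiff_iter_natCast, hval, fwdDiff_iter_addMonoidHom_comp,
    Function.comp_apply, fwdDiff_iter_choose_zero]
  split_ifs <;> simp

end Padic

section Closure

omit [FiniteDimensional ℚ_[p] E]

def locPolyClosure (r : ℝ) (d : ℕ) : Submodule E (ℤ_[p] → E) where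
  carrier := {f | ∀ ε > 0, ∃ g ∈ LocPoly p E d, CrNormLE p E r (f - g) ε}
  zero_mem' ε hε := ⟨0, zero_mem _, fun n => by
    rw [sub_zero, show mahlerCoeff p E 0 n = 0 from map_zero (mahlerCoeffₗ p E n), norm_zero,
      mul_zero]
    exact hε.le⟩
  add_mem' {f f'} hf hf' ε hε := by
    obtain ⟨g, hg, hfg⟩ := hf (ε / 2) (half_pos hε)
    obtain ⟨g', hg', hfg'⟩ := hf' (ε / 2) (half_pos hε)
    refine ⟨g + g', add_mem hg hg', ?_⟩
    rw [add_sub_add_comm]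
    exact (hfg.add hfg').mono (add_halves ε).le
  smul_mem' c f hf ε hε := by
    obtain ⟨g, hg, hfg⟩ := hf (ε / (‖c‖ + 1)) (by positivity)
    refine ⟨c • g, Submodule.smul_mem _ c hg, ?_⟩
    rw [← smul_sub]
    refine (hfg.smul c).mono ?_
    rw [mul_div_assoc', div_le_iff₀ (by positivity)]
    nlinarith [norm_nonneg c]

variable {p E}

lemma mem_locPolyClosure_of_forall {r : ℝ} {d : ℕ} {f : ℤ_[p] → E}
    (h : ∀ ε > 0, ∃ f' ∈ locPolyClosure p E r d, CrNormLE p E r (f - f') ε) :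
    f ∈ locPolyClosure p E r d := by
  intro ε hε
  obtain ⟨f', hf', hff'⟩ := h (ε / 2) (half_pos hε)
  obtain ⟨g, hg, hf'g⟩ := hf' (ε / 2) (half_pos hε)
  refine ⟨g, hg, ?_⟩
  simpa using (hff'.add hf'g).mono (add_halves ε).le

lemma ofPadicInt_comp_eval_mem_locPolyClosure {r : ℝ} (hr : 0 ≤ r) {d : ℕ} (hd : r - 1 < d)
    (Q : ℤ_[p][X]) : ofPadicInt p E ∘ Q.eval ∈ locPolyClosure p E r d := by
  have hp : (1 : ℝ) < p := mod_cast (Fact.out : p.Prime).one_lt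
  intro ε hε
  obtain ⟨C, hC⟩ := exists_forall_succ_rpow_mul_pow_le r (inv_pos.mpr (zero_lt_one.trans hp))
    (inv_lt_one_of_one_lt₀ hp)
  have hσ : (p : ℝ) ^ r * (p : ℝ)⁻¹ ^ (d + 1) < 1 := by
    rw [inv_pow, ← Real.rpow_natCast, ← Real.rpow_neg (by positivity),
      ← Real.rpow_add (by positivity)]
    exact Real.rpow_lt_one_of_one_lt_of_neg hp (by push_cast; linarith)
  set K := Q.natDegree + d + 1
  obtain ⟨N, hN⟩ : ∃ N : ℕ, C * (p : ℝ) ^ K * ((p : ℝ) ^ r * (p : ℝ)⁻¹ ^ (d + 1)) ^ N ≤ ε := by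
    have hlim := (tendsto_pow_atTop_nhds_zero_of_lt_one (by positivity) hσ).const_mul
      (C * (p : ℝ) ^ K)
    rw [mul_zero] at hlim
    exact (hlim.eventually (ge_mem_nhds hε)).exists
  refine ⟨localTaylor p E Q N (d + 1), localTaylor_mem_locPoly p E Q N d, ?_⟩
  rw [ofPadicInt_comp_eval_eq_localTaylor p E Q N (K := K) (by omega)]
  exact (crNormLE_localTaylor_sub p E hr hC Q N (by omega)).mono hN

lemma mahlerE_mem_locPolyClosure {r : ℝ} (hr : 0 ≤ r) {d : ℕ} (hd : r - 1 < d) (k : ℕ) :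
    mahlerE p E k ∈ locPolyClosure p E r d :=
  Submodule.smul_mem _ _ (ofPadicInt_comp_eval_mem_locPolyClosure hr hd _)

/-- The partial sums of the Mahler expansion of `f` converge to `f` in `C^r`. -/
lemma IsCr.mem_locPolyClosure {r : ℝ} (hr : 0 ≤ r) {d : ℕ} (hd : r - 1 < d) {f : ℤ_[p] → E}
    (hf : IsCr p E r f) : f ∈ locPolyClosure p E r d := by
  refine mem_locPolyClosure_of_forall fun ε hε => ?_
  obtain ⟨M, hM⟩ := eventually_atTop.mp
    (hf.tendsto_succ_rpow_mul_norm_mahlerCoeff.eventually (ge_mem_nhds hε))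
  refine ⟨∑ k ∈ range M, mahlerCoeff p E f k • mahlerE p E k,
    sum_mem fun k _ => Submodule.smul_mem _ _ (mahlerE_mem_locPolyClosure hr hd k), fun n => ?_⟩
  simp only [mahlerCoeff_sub, mahlerCoeff_sum, mahlerCoeff_smul, mahlerCoeff_mahlerE, mul_ite,
    mul_one, mul_zero, sum_ite_eq, mem_range]
  split_ifs with hn
  · simpa using hε.le
  · simpa using hM n (not_lt.mp hn)

end Closure

/-- If `d > r - 1`, locally polynomial functions of degree at most `d` are dense in
`C^r(ℤ_p, E)` for the norm `‖·‖_r`. -/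
theorem locPoly_dense (r : ℝ) (hr : 0 ≤ r) (d : ℕ) (hd : r - 1 < (d : ℝ)) :
    ∀ f : ℤ_[p] → E, IsCr p E r f → ∀ ε : ℝ, 0 < ε →
      ∃ g ∈ LocPoly p E d, crNorm p E r (f - g) < ε := by
  intro f hf ε hε
  obtain ⟨g, hg, hfg⟩ := hf.mem_locPolyClosure hr hd (ε / 2) (half_pos hε)
  exact ⟨g, hg, (hfg.crNorm_le (half_pos hε).le).trans_lt (half_lt_self hε)⟩
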